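/- Let Q be a polarization on X := N_ℝ/M', let ℓ : N_ℝ → ℝ be an ℝ-linear form, and for b ∈ M let ϑ_b be the associated tropical theta function, ϑ_b(x) := inf_{u' ∈ M'} ( Q(x, λ_ℝ^{-1}(b) + u') + (1/2) Q(u' + λ_ℝ^{-1}(b) − r, u' + λ_ℝ^{-1}(b) − r) ), where r ∈ N_ℝ is the unique vector with ℓ = Q(·, r). Then ϑ_b is quasi-periodic with respect to (Q, ℓ): for all x ∈ N_ℝ and all u'' ∈ M', ϑ_b(x + u'') = ϑ_b(x) − Q(x, u'') − (1/2) Q(u'', u'') + ℓ(u''). -/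

import Mathlib

/-!
Translating `x` by a lattice vector `a` and reindexing the infimum by `u ↦ u + a` changes each
term of the infimum by the same constant `-Q(x, a) - ½ Q(a, a) + Q(a, r)`, a completion of the
square. The infimum is not a junk value because completing the square also bounds every term
below by `Q(x, r) - ½ Q(x, x)`.
-/

noncomputable section

theorem csInf_setOf_exists_mem_add_const {α ι σ : Type*} [ConditionallyCompleteLattice α]
    [AddGroup α] [AddRightMono α] [Membership ι σ] {s : σ} {f : ι → α}
    (hne : ∃ u, u ∈ s) (hbdd : BddBelow {t | ∃ u ∈ s, t = f u}) (C : α) :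
    sInf {t | ∃ u ∈ s, t = f u + C} = sInf {t | ∃ u ∈ s, t = f u} + C := by
  have himage : {t | ∃ u ∈ s, t = f u + C} = (· + C) '' {t | ∃ u ∈ s, t = f u} := by
    ext t
    simp only [Set.mem_ofPred_eq, Set.mem_image]
    grind
  obtain ⟨u, hu⟩ := hne
  have hne' : {t | ∃ u ∈ s, t = f u}.Nonempty := ⟨f u, u, hu, rfl⟩
  rw [himage]
  exact ((OrderIso.addRight C).map_csInf' hne' hbdd).symm

theorem setOf_exists_mem_add_right {G β S : Type*} [AddGroup G] [SetLike S G]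
    [AddSubgroupClass S G] {L : S} {a : G} (ha : a ∈ L) (f : G → β) :
    {t | ∃ u ∈ L, t = f (u + a)} = {t | ∃ u ∈ L, t = f u} := by
  ext t
  constructor
  · rintro ⟨u, hu, rfl⟩
    exact ⟨u + a, add_mem hu ha, rfl⟩
  · rintro ⟨u, hu, rfl⟩
    exact ⟨u - a, sub_mem hu ha, by rw [sub_add_cancel]⟩

namespace TropicalTheta

variable {V : Type*} [AddCommGroup V] [Module ℝ V] (Q : LinearMap.BilinForm ℝ V) (r c : V)

def term (x u : V) : ℝ :=
  Q x (c + u) + (1 / 2) * Q (u + c - r) (u + c - r)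

theorem term_add_left {Q} (hQ : Q.IsSymm) (x a u : V) :
    term Q r c (x + a) u = term Q r c x (u + a) + (-Q x a - (1 / 2) * Q a a + Q a r) := by
  have := hQ.eq
  simp only [term, map_add, map_sub, LinearMap.add_apply, LinearMap.sub_apply]
  linear_combination (-1 / 2) * this u a - (1 / 2) * this c a + (1 / 2) * this r a

theorem le_term {Q} (hQ : Q.IsPosSemidef) (x u : V) :
    Q x r - (1 / 2) * Q x x ≤ term Q r c x u := by
  have hsq := hQ.isNonneg.nonneg (u + c - r + x)
  have := hQ.isSymm.eq
  simp only [term, map_add, map_sub, LinearMap.add_apply, LinearMap.sub_apply] at hsq ⊢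
  nlinarith [this x u, this x c, this x r]

/-- `ϑ_b` for the lattice `L`, where `c = λ_ℝ⁻¹(b)` and `r` represents `ℓ = Q(·, r)`. -/
def tropicalTheta {S : Type*} [SetLike S V] (L : S) (x : V) : ℝ :=
  sInf {t | ∃ u ∈ L, t = term Q r c x u}

theorem tropicalTheta_add_of_mem {Q} (hQ : Q.IsPosSemidef) {S : Type*} [SetLike S V]
    [AddSubgroupClass S V] {L : S} {a : V} (ha : a ∈ L) (x : V) :
    tropicalTheta Q r c L (x + a) =
      tropicalTheta Q r c L x - Q x a - (1 / 2) * Q a a + Q a r := by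
  have hbdd : BddBelow {t | ∃ u ∈ L, t = term Q r c x (u + a)} :=
    ⟨_, by rintro _ ⟨u, -, rfl⟩; exact le_term r c hQ x (u + a)⟩
  unfold tropicalTheta
  simp_rw [term_add_left r c hQ.isSymm x a]
  rw [csInf_setOf_exists_mem_add_const ⟨0, zero_mem L⟩ hbdd,
    setOf_exists_mem_add_right ha (term Q r c x)]
  ring

end TropicalTheta

theorem tropical_theta_quasi_periodic
    (M : Type*) [AddCommGroup M] [Module ℤ M]
    (M' : Submodule ℤ (M →ₗ[ℤ] ℝ))
    (Q : (M →ₗ[ℤ] ℝ) →ₗ[ℝ] (M →ₗ[ℤ] ℝ) →ₗ[ℝ] ℝ)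
    (hsymm : ∀ x y, Q x y = Q y x)
    (hpos : ∀ x, x ≠ 0 → 0 < Q x x)
    (ℓ : (M →ₗ[ℤ] ℝ) →ₗ[ℝ] ℝ) (r : M →ₗ[ℤ] ℝ) (hr : ∀ x, ℓ x = Q x r)
    (c : M →ₗ[ℤ] ℝ)
    (x u'' : M →ₗ[ℤ] ℝ) (hu'' : u'' ∈ M') :
    sInf {t : ℝ | ∃ u' ∈ M',
        t = Q (x + u'') (c + u') + (1 / 2) * Q (u' + c - r) (u' + c - r)}
      = sInf {t : ℝ | ∃ u' ∈ M',
          t = Q x (c + u') + (1 / 2) * Q (u' + c - r) (u' + c - r)}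
        - Q x u'' - (1 / 2) * Q u'' u'' + ℓ u'' := by
  have hQ : LinearMap.BilinForm.IsPosSemidef Q :=
    ⟨⟨hsymm⟩, ⟨fun v => by
      rcases eq_or_ne v 0 with rfl | hv
      · simp
      · exact (hpos v hv).le⟩⟩
  rw [hr]
  exact TropicalTheta.tropicalTheta_add_of_mem r c hQ hu'' x

end
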